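/- The identity 𝒩₂⁰(x̂) = −∇_S Y₁⁰(x̂) + 2 Y₁⁰(x̂) x̂ = N⁽⁰⁾ · (Y₂⁻², Y₂⁻¹, Y₂⁰, Y₂¹, Y₂²)ᵀ(x̂) holds for all x̂ ∈ 𝕊², where N⁽⁰⁾ is the 3×5 complex matrix with rows (0, 3√10/10, 0, −3√10/10, 0), (0, 3√10/10·i, 0, 3√10/10·i, 0), (0, 0, 2√15/5, 0, 0). -/

import Mathlib

open Real Complex

local notation "E3" => EuclideanSpace ℝ (Fin 3)

/-- Radial projection `x ↦ x/‖x‖`. -/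
noncomputable def unitize (x : E3) : E3 := ‖x‖⁻¹ • x

/-- Surface gradient on `𝕊²`: gradient of the degree-0 homogeneous extension. -/
noncomputable def surfGrad (f : E3 → ℂ) (x : E3) (i : Fin 3) : ℂ :=
  fderiv ℝ (fun y => f (unitize y)) x (EuclideanSpace.single i 1)

/-- `Y₁⁰(x̂) = √(3/(4π)) x̂₃`. -/
noncomputable def Y10 (x : E3) : ℂ := (Real.sqrt (3 / (4 * Real.pi)) : ℂ) * (x 2 : ℂ)

/-- The degree-2 complex spherical harmonics (Condon–Shortley normalization)
`(Y₂⁻², Y₂⁻¹, Y₂⁰, Y₂¹, Y₂²)`, in Cartesian coordinates on the unit sphere. -/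
noncomputable def Y2 : Fin 5 → E3 → ℂ :=
  ![fun x => (Real.sqrt (15 / (32 * Real.pi)) : ℂ) * ((x 0 : ℂ) - Complex.I * (x 1 : ℂ)) ^ 2,
    fun x => (Real.sqrt (15 / (8 * Real.pi)) : ℂ) *
      ((x 0 : ℂ) - Complex.I * (x 1 : ℂ)) * (x 2 : ℂ),
    fun x => (Real.sqrt (5 / (16 * Real.pi)) : ℂ) * (3 * (x 2 : ℂ) ^ 2 - 1),
    fun x => -(Real.sqrt (15 / (8 * Real.pi)) : ℂ) *
      ((x 0 : ℂ) + Complex.I * (x 1 : ℂ)) * (x 2 : ℂ),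
    fun x => (Real.sqrt (15 / (32 * Real.pi)) : ℂ) * ((x 0 : ℂ) + Complex.I * (x 1 : ℂ)) ^ 2]

/-- The matrix `N⁽⁰⁾`. -/
noncomputable def N0 : Matrix (Fin 3) (Fin 5) ℂ :=
  !![0, ((3 * Real.sqrt 10 / 10 : ℝ) : ℂ), 0, -((3 * Real.sqrt 10 / 10 : ℝ) : ℂ), 0;
     0, ((3 * Real.sqrt 10 / 10 : ℝ) : ℂ) * Complex.I, 0,
       ((3 * Real.sqrt 10 / 10 : ℝ) : ℂ) * Complex.I, 0;
     0, 0, ((2 * Real.sqrt 15 / 5 : ℝ) : ℂ), 0, 0]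

/-!
The derivative of `x ↦ x / ‖x‖` at a unit vector `x` is the tangential projection
`v ↦ v - ⟪x, v⟫ x`, so the surface gradient of the linear function `Y₁⁰ = c x₃` is
`c (e₃ - x₃ x)` and `𝒩₂⁰ = c (3 x₃ x - e₃)`. Its components `3c x₁x₃`, `3c x₂x₃`,
`c (3x₃² - 1)` are visibly combinations of `Y₂^{±1}` and `Y₂⁰`; the normalising constants
match because `√10 · √(15/(8π)) = 5 √(3/(4π))` and `√15 · √(5/(16π)) = 5/2 · √(3/(4π))`.
-/

section InnerProductSpace

variable {E : Type*} [NormedAddCommGroup E] [InnerProductSpace ℝ E]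

theorem hasFDerivAt_norm_of_ne_zero {x : E} (hx : x ≠ 0) :
    HasFDerivAt (‖·‖) (‖x‖⁻¹ • innerSL ℝ x) x := by
  have h := (hasStrictFDerivAt_norm_sq x).hasFDerivAt.sqrt (by positivity)
  simp only [Real.sqrt_sq (norm_nonneg _)] at h
  convert h using 1
  ext v
  simp only [smul_apply, coe_innerSL_apply, smul_eq_mul, one_div, mul_inv_rev, nsmul_eq_mul, Nat.cast_ofNat]
  field_simp

theorem hasFDerivAt_inv_norm_smul_of_norm_eq_one {x : E} (hx : ‖x‖ = 1) :
    HasFDerivAt (fun y : E => ‖y‖⁻¹ • y)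
      (ContinuousLinearMap.id ℝ E - (innerSL ℝ x).smulRight x) x := by
  have hx0 : x ≠ 0 := norm_ne_zero_iff.mp (hx ▸ one_ne_zero)
  have h := ((hasDerivAt_inv (by rwa [norm_ne_zero_iff])).comp_hasFDerivAt x
    (hasFDerivAt_norm_of_ne_zero hx0)).smul (hasFDerivAt_id x)
  refine h.congr_fderiv ?_
  ext v
  simp [hx, sub_eq_add_neg]

end InnerProductSpace

theorem surfGrad_eq_fderiv_tangential {f : E3 → ℂ} {x : E3} (hx : ‖x‖ = 1)
    (hf : DifferentiableAt ℝ f x) (i : Fin 3) :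
    surfGrad f x i = fderiv ℝ f x (EuclideanSpace.single i 1 - x i • x) := by
  have hux : unitize x = x := by simp [unitize, hx]
  have h := (hux ▸ hf).hasFDerivAt.comp x (hasFDerivAt_inv_norm_smul_of_norm_eq_one hx)
  change fderiv ℝ (f ∘ unitize) x _ = _
  rw [h.fderiv, hux]
  simp [EuclideanSpace.inner_single_right]

theorem hasFDerivAt_Y10 (x : E3) :
    HasFDerivAt Y10 ((√(3 / (4 * π)) : ℂ) •
      (Complex.ofRealCLM.comp (EuclideanSpace.proj 2) : E3 →L[ℝ] ℂ)) x := by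
  have hY : Y10 = (√(3 / (4 * π)) : ℂ) •
      ⇑(Complex.ofRealCLM.comp (EuclideanSpace.proj 2) : E3 →L[ℝ] ℂ) := by
    ext y; simp [Y10]
  rw [hY]
  exact (Complex.ofRealCLM.comp (EuclideanSpace.proj 2)).hasFDerivAt.const_smul _

theorem surfGrad_Y10 {x : E3} (hx : ‖x‖ = 1) (i : Fin 3) :
    surfGrad Y10 x i =
      √(3 / (4 * π)) * ((if i = 2 then 1 else 0) - (x i : ℂ) * (x 2 : ℂ)) := by
  rw [surfGrad_eq_fderiv_tangential hx (hasFDerivAt_Y10 x).differentiableAt,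
    (hasFDerivAt_Y10 x).fderiv]
  simp only [FunLike.coe_smul, Pi.smul_apply, ContinuousLinearMap.comp_apply, PiLp.proj_apply,
    PiLp.sub_apply, PiLp.single_apply, PiLp.smul_apply, smul_eq_mul, ofRealCLM_apply, ofReal_sub,
    ofReal_mul, eq_comm (a := (2 : Fin 3)), apply_ite Complex.ofReal, ofReal_one, ofReal_zero]

theorem sqrt_mul_sqrt_eq_mul_sqrt {a b c k : ℝ} (ha : 0 ≤ a) (hk : 0 ≤ k)
    (h : a * b = k ^ 2 * c) : √a * √b = k * √c := by
  rw [← Real.sqrt_mul ha, h, Real.sqrt_mul (sq_nonneg k), Real.sqrt_sq hk]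

theorem N0_zero_one_mul_Y2_one_coeff :
    3 * √10 / 10 * √(15 / (8 * π)) = 3 / 2 * √(3 / (4 * π)) := by
  have h := sqrt_mul_sqrt_eq_mul_sqrt (a := 10) (b := 15 / (8 * π)) (k := 5) (c := 3 / (4 * π))
    (by norm_num) (by norm_num) (by field_simp; ring)
  linear_combination 3 / 10 * h

theorem N0_two_two_mul_Y2_two_coeff :
    2 * √15 / 5 * √(5 / (16 * π)) = √(3 / (4 * π)) := by
  have h := sqrt_mul_sqrt_eq_mul_sqrt (a := 15) (b := 5 / (16 * π)) (k := 5 / 2)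
    (c := 3 / (4 * π)) (by norm_num) (by norm_num) (by field_simp; ring)
  linear_combination 2 / 5 * h

/-- `𝒩₂⁰(x̂) = −∇_S Y₁⁰(x̂) + 2 Y₁⁰(x̂) x̂ = N⁽⁰⁾ (Y₂⁻², Y₂⁻¹, Y₂⁰, Y₂¹, Y₂²)ᵀ(x̂)`
for all `x̂ ∈ 𝕊²`, componentwise in `ℂ³`. -/
theorem Nvec_two_zero_eq_matrix_combination (x : E3) (hx : ‖x‖ = 1) (i : Fin 3) :
    -surfGrad Y10 x i + 2 * Y10 x * ((x i : ℝ) : ℂ) = ∑ j : Fin 5, N0 i j * Y2 j x := by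
  have h₁ : ((3 * √10 / 10 : ℝ) : ℂ) * (√(15 / (8 * π)) : ℂ) = 3 / 2 * (√(3 / (4 * π)) : ℂ) := by
    rw [← ofReal_mul, N0_zero_one_mul_Y2_one_coeff]; push_cast; ring
  have h₂ : ((2 * √15 / 5 : ℝ) : ℂ) * (√(5 / (16 * π)) : ℂ) = (√(3 / (4 * π)) : ℂ) := by
    rw [← ofReal_mul, N0_two_two_mul_Y2_two_coeff]
  rw [surfGrad_Y10 hx, Y10]
  fin_cases i <;>
    simp only [Fin.sum_univ_five, N0, Y2, Matrix.of_apply, Matrix.cons_val', Matrix.cons_val,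
      Matrix.cons_val_fin_one, Fin.reduceFinMk, Fin.reduceEq, reduceIte]
  · linear_combination (-2 * (x 0 : ℂ) * (x 2 : ℂ)) * h₁
  · linear_combination (2 * I ^ 2 * (x 1 : ℂ) * (x 2 : ℂ)) * h₁
      + 3 * (√(3 / (4 * π)) : ℂ) * (x 1 : ℂ) * (x 2 : ℂ) * I_sq
  · linear_combination (1 - 3 * (x 2 : ℂ) ^ 2) * h₂
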